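/- arXiv:1606.05988 — 4 statements merged into one kernel-verified Lean document; each statement's English description precedes it below -/
import Mathlib

section
/- Let S_B = d dᵀ for a nonzero vector d ∈ ℝ^p and let S_T be symmetric positive definite. If w ∈ ℝ^p with wᵀw = 1, dᵀw ≠ 0, is a critical point of the Lagrangian condition S_B w/(wᵀS_Bw) + (γ−1) S_T w/(wᵀS_Tw) − λ w = 0 for some λ ∈ ℝ and γ ≠ 1, then λ = γ, and w is proportional to (S_T + α I)⁻¹ d where α = (γ/(1−γ)) · wᵀS_Tw, provided S_T + αI is invertible. -/
open Matrix

/-- For rank-one `S_B = d dᵀ`, a unit-norm critical point of the Lagrangian condition has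
multiplier `λ = γ` and is proportional to the ridge solution `(S_T + αI)⁻¹ d` with
`α = (γ/(1−γ)) wᵀS_Tw`. -/
theorem stmt4 {p : ℕ} (d : Fin p → ℝ) (SB ST : Matrix (Fin p) (Fin p) ℝ)
    (hSB : SB = vecMulVec d d) (hST : ST.PosDef)
    (γ lam : ℝ) (hγ : γ ≠ 1)
    (w : Fin p → ℝ) (hw : w ⬝ᵥ w = 1) (hdw : d ⬝ᵥ w ≠ 0)
    (hcrit : (w ⬝ᵥ (SB *ᵥ w))⁻¹ • (SB *ᵥ w)
      + ((γ - 1) / (w ⬝ᵥ (ST *ᵥ w))) • (ST *ᵥ w) - lam • w = 0)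
    (α : ℝ) (hα : α = γ / (1 - γ) * (w ⬝ᵥ (ST *ᵥ w)))
    (hinv : IsUnit (ST + α • 1).det) :
    lam = γ ∧ ∃ c : ℝ, c ≠ 0 ∧ w = c • ((ST + α • 1)⁻¹ *ᵥ d) := by
  have hw0 : w ≠ 0 := by
    intro h; rw [h] at hw; simp at hw
  set t := w ⬝ᵥ (ST *ᵥ w) with ht_def
  have ht : 0 < t := by
    have := hST.dotProduct_mulVec_pos hw0
    simpa using this
  have htne : t ≠ 0 := ne_of_gt ht
  have h1γ : (1 : ℝ) - γ ≠ 0 := sub_ne_zero.mpr (Ne.symm hγ)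
  have hwd : w ⬝ᵥ d ≠ 0 := by rwa [dotProduct_comm]
  have hSBw : SB *ᵥ w = (d ⬝ᵥ w) • d := by
    subst hSB
    ext i
    simp [vecMulVec_apply, mulVec, dotProduct, Finset.mul_sum, mul_comm, mul_left_comm]
  have hwSBw : w ⬝ᵥ (SB *ᵥ w) = (d ⬝ᵥ w) * (d ⬝ᵥ w) := by
    rw [hSBw, dotProduct_smul, smul_eq_mul, dotProduct_comm w d]
  have hcrit' : (d ⬝ᵥ w)⁻¹ • d + ((γ - 1) / t) • (ST *ᵥ w) - lam • w = 0 := by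
    have e : (w ⬝ᵥ (SB *ᵥ w))⁻¹ • (SB *ᵥ w) = (d ⬝ᵥ w)⁻¹ • d := by
      rw [hwSBw, hSBw, smul_smul, mul_inv, mul_assoc, inv_mul_cancel₀ hdw, mul_one]
    rwa [e] at hcrit
  have hlam : lam = γ := by
    have h := congrArg (fun v => w ⬝ᵥ v) hcrit'
    simp only [dotProduct_add, dotProduct_sub, dotProduct_smul, dotProduct_zero,
      smul_eq_mul, hw, ← ht_def] at h
    rw [div_mul_cancel₀ _ htne] at h
    rw [inv_mul_eq_div, dotProduct_comm w d, div_self hdw] at h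
    linarith
  rw [hlam] at hcrit'
  refine ⟨hlam, t / ((1 - γ) * (d ⬝ᵥ w)), div_ne_zero htne (mul_ne_zero h1γ hdw), ?_⟩
  have hkey : ((1 - γ) / t) • ((ST + α • 1) *ᵥ w) = (d ⬝ᵥ w)⁻¹ • d := by
    rw [add_mulVec, smul_mulVec, one_mulVec, smul_add, smul_smul]
    have hαγ : (1 - γ) / t * α = γ := by
      rw [hα]; field_simp
    rw [hαγ]
    have h3 : (d ⬝ᵥ w)⁻¹ • d + ((γ - 1) / t) • (ST *ᵥ w) = γ • w := sub_eq_zero.mp hcrit'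
    rw [show ((1 : ℝ) - γ) / t = -((γ - 1) / t) by ring, neg_smul, ← h3]
    abel
  have hmul : (ST + α • 1) *ᵥ w = (t / ((1 - γ) * (d ⬝ᵥ w))) • d := by
    have h2 := congrArg (fun v => (t / (1 - γ)) • v) hkey
    simp only [smul_smul] at h2
    have e1 : t / (1 - γ) * ((1 - γ) / t) = 1 := by field_simp
    have e2 : t / (1 - γ) * (d ⬝ᵥ w)⁻¹ = t / ((1 - γ) * (d ⬝ᵥ w)) := by
      field_simp
    rw [e1, one_smul, e2] at h2
    exact h2
  have hback : (ST + α • 1)⁻¹ *ᵥ ((ST + α • 1) *ᵥ w) = w := by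
    rw [mulVec_mulVec, nonsing_inv_mul _ hinv, one_mulVec]
  conv_lhs => rw [← hback, hmul, mulVec_smul]
end

section
/- Let λ_{ι+1} > λ_{ι+2} ≥ … ≥ λ_m > 0 and δ_{ι+1}, …, δ_m ∈ ℝ with δ_{ι+1} ≠ 0. Define, for a > λ_{ι+1}, M_k(a) = Σ_{i=ι+1}^m δ_i²/(a − λ_i)^k for k = 1,2,…. Then M_k(a) > 0, the derivative satisfies M_k'(a) = −k M_{k+1}(a), and the function a ↦ a·M₂(a)/M₁(a) is nonincreasing on (λ_{ι+1}, ∞). -/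
/-- Properties of `M_k(a) = Σ δ_i²/(a−λ_i)^k` for `a > λ₀` (the strictly largest
eigenvalue): positivity, derivative identity `M_k' = −k M_{k+1}`, and monotonicity of
`a ↦ a M₂(a)/M₁(a)`. -/
theorem stmt9 {n : ℕ} (lam δ : Fin (n + 1) → ℝ)
    (hlam0 : ∀ i, i ≠ 0 → lam i < lam 0) (hpos : ∀ i, 0 < lam i)
    (hδ : δ 0 ≠ 0)
    (M : ℕ → ℝ → ℝ) (hM : ∀ k a, M k a = ∑ i, δ i ^ 2 / (a - lam i) ^ k) :
    (∀ (k : ℕ) (a : ℝ), lam 0 < a → 0 < M k a) ∧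
    (∀ (k : ℕ) (a : ℝ), lam 0 < a → HasDerivAt (M k) (-(k : ℝ) * M (k + 1) a) a) ∧
    AntitoneOn (fun a => a * M 2 a / M 1 a) (Set.Ioi (lam 0)) := by
  have hsub : ∀ (a : ℝ), lam 0 < a → ∀ i, 0 < a - lam i := by
    intro a ha i
    rcases eq_or_ne i 0 with rfl | hi
    · linarith
    · have := hlam0 i hi; linarith
  have h1 : ∀ (k : ℕ) (a : ℝ), lam 0 < a → 0 < M k a := by
    intro k a ha
    rw [hM]
    apply Finset.sum_pos'
    · intro i _
      exact div_nonneg (sq_nonneg _) (pow_nonneg (hsub a ha i).le k)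
    · exact ⟨0, Finset.mem_univ 0,
        div_pos (pow_pos (abs_pos.mpr hδ) 2 |>.trans_eq (by rw [sq_abs]))
          (pow_pos (hsub a ha 0) k)⟩
  have h2 : ∀ (k : ℕ) (a : ℝ), lam 0 < a → HasDerivAt (M k) (-(k : ℝ) * M (k + 1) a) a := by
    intro k a ha
    have hfun : M k = fun x => ∑ i, δ i ^ 2 * (x - lam i) ^ (-(k : ℤ)) := by
      funext x
      rw [hM]
      refine Finset.sum_congr rfl fun i _ => ?_
      rw [zpow_neg, zpow_natCast, div_eq_mul_inv]
    rw [hfun]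
    have : HasDerivAt (fun x => ∑ i, δ i ^ 2 * (x - lam i) ^ (-(k : ℤ)))
        (∑ i, δ i ^ 2 * (((-(k : ℤ)) : ℝ) * (a - lam i) ^ (-(k : ℤ) - 1) * 1)) a := by
      apply HasDerivAt.fun_sum
      intro i _
      have := ((hasDerivAt_zpow (-(k : ℤ)) (a - lam i)
        (Or.inl (hsub a ha i).ne')).comp a
        ((hasDerivAt_id a).sub_const (lam i))).const_mul (δ i ^ 2)
      simpa [Function.comp] using this
    convert this using 1
    rw [hM, Finset.mul_sum]
    refine Finset.sum_congr rfl fun i _ => ?_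
    have hz : -(k : ℤ) - 1 = -((k + 1 : ℕ) : ℤ) := by push_cast; ring
    rw [hz, zpow_neg, zpow_natCast, div_eq_mul_inv]
    push_cast
    ring
  refine ⟨h1, h2, ?_⟩
  have hint : interior (Set.Ioi (lam 0)) = Set.Ioi (lam 0) := isOpen_Ioi.interior_eq
  have hderiv : ∀ a ∈ Set.Ioi (lam 0), HasDerivAt (fun a => a * M 2 a / M 1 a)
      (((1 * M 2 a + a * (-(2 : ℝ) * M 3 a)) * M 1 a - a * M 2 a * (-(1 : ℝ) * M 2 a))
        / (M 1 a) ^ 2) a := by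
    intro a ha
    exact ((hasDerivAt_id a).mul (by exact_mod_cast h2 2 a ha)).div
      (by exact_mod_cast h2 1 a ha) (h1 1 a ha).ne'
  apply antitoneOn_of_deriv_nonpos (convex_Ioi _)
  · exact fun a ha => (hderiv a ha).continuousAt.continuousWithinAt
  · rw [hint]
    exact fun a ha => (hderiv a ha).differentiableAt.differentiableWithinAt
  · rw [hint]
    intro a ha
    rw [(hderiv a ha).deriv]
    have hM1 := h1 1 a ha
    have hM2 := h1 2 a ha
    have hM3 := h1 3 a ha
    have ha0 : (0 : ℝ) < a := (hpos 0).trans ha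
    -- Cauchy–Schwarz : M2² ≤ M1 M3
    have hCS : M 2 a ^ 2 ≤ M 1 a * M 3 a := by
      have key := Finset.sum_mul_sq_le_sq_mul_sq Finset.univ
        (fun i => |δ i| / Real.sqrt (a - lam i))
        (fun i => |δ i| / Real.sqrt (a - lam i) / (a - lam i))
      have e2 : M 2 a = ∑ i, (|δ i| / Real.sqrt (a - lam i)) *
          (|δ i| / Real.sqrt (a - lam i) / (a - lam i)) := by
        rw [hM]
        refine Finset.sum_congr rfl fun i _ => ?_
        have ht := hsub a ha i
        set s := Real.sqrt (a - lam i) with hsdef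
        have hs : s ^ 2 = a - lam i := Real.sq_sqrt ht.le
        have hsn : s ≠ 0 := (Real.sqrt_pos.mpr ht).ne'
        rw [← hs, show |δ i| / s * (|δ i| / s / s ^ 2) = |δ i| ^ 2 / s ^ 4 by
          field_simp, sq_abs]
        ring
      have e1 : M 1 a = ∑ i, (|δ i| / Real.sqrt (a - lam i)) ^ 2 := by
        rw [hM]
        refine Finset.sum_congr rfl fun i _ => ?_
        have ht := hsub a ha i
        set s := Real.sqrt (a - lam i) with hsdef
        have hs : s ^ 2 = a - lam i := Real.sq_sqrt ht.le
        rw [← hs, div_pow, sq_abs, pow_one]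
      have e3 : M 3 a = ∑ i, (|δ i| / Real.sqrt (a - lam i) / (a - lam i)) ^ 2 := by
        rw [hM]
        refine Finset.sum_congr rfl fun i _ => ?_
        have ht := hsub a ha i
        set s := Real.sqrt (a - lam i) with hsdef
        have hs : s ^ 2 = a - lam i := Real.sq_sqrt ht.le
        rw [← hs, div_pow, div_pow, sq_abs]
        ring
      rw [e1, e2, e3]
      exact key
    -- M2 ≤ a M3
    have h23 : M 2 a ≤ a * M 3 a := by
      rw [hM, hM, Finset.mul_sum]
      refine Finset.sum_le_sum fun i _ => ?_
      have h := hsub a ha i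
      rw [div_le_iff₀ (by positivity)]
      have heq : a * (δ i ^ 2 / (a - lam i) ^ 3) * (a - lam i) ^ 2
          = a * δ i ^ 2 / (a - lam i) := by
        field_simp
      rw [heq, le_div_iff₀ h]
      nlinarith [sq_nonneg (δ i), hpos i]
    have hnum : (1 * M 2 a + a * (-(2 : ℝ) * M 3 a)) * M 1 a
        - a * M 2 a * (-(1 : ℝ) * M 2 a) ≤ 0 := by
      nlinarith [mul_le_mul_of_nonneg_left h23 hM1.le,
        mul_le_mul_of_nonneg_left hCS ha0.le]
    exact div_nonpos_of_nonpos_of_nonneg hnum (sq_nonneg _)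
end

section
/- Let Λ₂ = diag(λ_{ι+1},…,λ_m) with all λ_i < λ₁, and δ₂ ∈ ℝ^{m−ι} nonzero. Suppose z = (z₁, z₂) ∈ ℝ^ι × ℝ^{m−ι} with ‖z₁‖² + ‖z₂‖² = 1, ‖z₁‖ > 0, and z satisfies the stationarity system (γ−1)·λ₁ z₁/(λ₁‖z₁‖² + z₂ᵀΛ₂z₂) = γ z₁ and δ₂/(z₂ᵀδ₂) + (γ−1)Λ₂z₂/(λ₁‖z₁‖² + z₂ᵀΛ₂z₂) = γ z₂ with z₂ᵀδ₂ ≠ 0 and γ > 0. Then λ₁‖z₁‖² = ((γ−1)/γ)λ₁ − z₂ᵀΛ₂z₂, and z₂ is a scalar multiple of (Λ₂ − λ₁I)⁻¹δ₂ with c² = −λ₁/(γ·δ₂ᵀ(Λ₂ − λ₁I)⁻¹δ₂). -/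
open Matrix

/-- Canonical-coordinate analysis when the mean difference is orthogonal to the top
eigenspace: the stationarity system forces `λ₁‖z₁‖² = ((γ−1)/γ)λ₁ − z₂ᵀΛ₂z₂` and
`z₂ ∝ (Λ₂ − λ₁I)⁻¹δ₂` with the stated squared scale. -/
theorem stmt11 {ι r : ℕ} (lam1 : ℝ) (lam2 : Fin r → ℝ) (hlam : ∀ i, lam2 i < lam1)
    (δ2 : Fin r → ℝ) (hδ2 : δ2 ≠ 0)
    (γ : ℝ) (hγ : 0 < γ)
    (z1 : Fin ι → ℝ) (z2 : Fin r → ℝ)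
    (hnorm : z1 ⬝ᵥ z1 + z2 ⬝ᵥ z2 = 1) (hz1 : z1 ≠ 0) (hdot : z2 ⬝ᵥ δ2 ≠ 0)
    (D : ℝ) (hD : D = lam1 * (z1 ⬝ᵥ z1) + z2 ⬝ᵥ (Matrix.diagonal lam2 *ᵥ z2))
    (heq1 : ((γ - 1) * lam1 / D) • z1 = γ • z1)
    (heq2 : (z2 ⬝ᵥ δ2)⁻¹ • δ2 + ((γ - 1) / D) • (Matrix.diagonal lam2 *ᵥ z2) = γ • z2) :
    lam1 * (z1 ⬝ᵥ z1) = ((γ - 1) / γ) * lam1 - z2 ⬝ᵥ (Matrix.diagonal lam2 *ᵥ z2) ∧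
    ∃ c : ℝ, z2 = c • ((Matrix.diagonal lam2 - lam1 • 1)⁻¹ *ᵥ δ2) ∧
      c ^ 2 = -lam1 / (γ * (δ2 ⬝ᵥ ((Matrix.diagonal lam2 - lam1 • 1)⁻¹ *ᵥ δ2))) := by
  -- extract scalar identity from heq1
  obtain ⟨i0, hi0⟩ := Function.ne_iff.mp hz1
  have hscal : (γ - 1) * lam1 / D = γ := by
    have := congrFun heq1 i0
    simp only [Pi.smul_apply, smul_eq_mul] at this
    exact mul_right_cancel₀ hi0 this
  have hDne : D ≠ 0 := by
    intro h
    rw [h, div_zero] at hscal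
    exact hγ.ne' hscal.symm
  have hkey : (γ - 1) * lam1 = γ * D := by
    field_simp at hscal; linarith [hscal]
  have hlam1ne : lam1 ≠ 0 := by
    intro h
    rw [h, mul_zero] at hkey
    rcases mul_eq_zero.mp hkey.symm with h' | h'
    · exact hγ.ne' h'
    · exact hDne h'
  have hγne : γ ≠ 0 := hγ.ne'
  have first : lam1 * (z1 ⬝ᵥ z1) = ((γ - 1) / γ) * lam1 - z2 ⬝ᵥ (Matrix.diagonal lam2 *ᵥ z2) := by
    have : lam1 * (z1 ⬝ᵥ z1) = D - z2 ⬝ᵥ (Matrix.diagonal lam2 *ᵥ z2) := by linarith [hD]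
    rw [this]
    have : D = ((γ - 1) / γ) * lam1 := by field_simp; linarith [hkey]
    rw [this]
  refine ⟨first, ?_⟩
  -- the coefficient identity
  have hcoef : (γ - 1) / D = γ / lam1 := by
    rw [div_eq_div_iff hDne hlam1ne]; linarith [hkey]
  -- diagonal inverse
  have hM : (Matrix.diagonal lam2 - lam1 • 1 : Matrix (Fin r) (Fin r) ℝ)
      = Matrix.diagonal (fun i => lam2 i - lam1) := by
    rw [smul_one_eq_diagonal, Matrix.diagonal_sub]
  have hMinv : ((Matrix.diagonal lam2 - lam1 • 1 : Matrix (Fin r) (Fin r) ℝ))⁻¹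
      = Matrix.diagonal (fun i => (lam2 i - lam1)⁻¹) := by
    rw [hM]
    apply Matrix.inv_eq_right_inv
    rw [Matrix.diagonal_mul_diagonal]
    have : (fun i => (lam2 i - lam1) * (lam2 i - lam1)⁻¹) = fun _ : Fin r => (1:ℝ) := by
      funext i; exact mul_inv_cancel₀ (sub_ne_zero.mpr (hlam i).ne)
    rw [this, Matrix.diagonal_one]
  set w : Fin r → ℝ := fun i => (lam2 i - lam1)⁻¹ * δ2 i with hw
  have hwv : ((Matrix.diagonal lam2 - lam1 • 1 : Matrix (Fin r) (Fin r) ℝ))⁻¹ *ᵥ δ2 = w := by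
    rw [hMinv]; funext i; simp [Matrix.mulVec_diagonal, hw]
  set s : ℝ := (z2 ⬝ᵥ δ2)⁻¹ with hs
  set c : ℝ := -lam1 * s / γ with hc
  have hz2w : z2 = c • w := by
    funext i
    have h2 := congrFun heq2 i
    simp only [Pi.add_apply, Pi.smul_apply, smul_eq_mul, Matrix.mulVec_diagonal] at h2
    rw [hcoef] at h2
    have hdiff : lam2 i - lam1 ≠ 0 := sub_ne_zero.mpr (hlam i).ne
    simp only [Pi.smul_apply, smul_eq_mul, hw, hc]
    field_simp
    field_simp at h2
    ring_nf
    ring_nf at h2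
    linarith [h2]
  refine ⟨c, by rw [hwv, hz2w], ?_⟩
  rw [hwv]
  have hq : δ2 ⬝ᵥ w = w ⬝ᵥ δ2 := dotProduct_comm _ _
  have hzd : z2 ⬝ᵥ δ2 = c * (w ⬝ᵥ δ2) := by
    rw [hz2w, smul_dotProduct, smul_eq_mul]
  have hcne : c ≠ 0 := by
    intro h
    rw [h, zero_mul] at hzd
    exact hdot hzd
  have hqne : w ⬝ᵥ δ2 ≠ 0 := by
    intro h
    rw [h, mul_zero] at hzd
    exact hdot hzd
  have hsval : s = (c * (w ⬝ᵥ δ2))⁻¹ := by rw [hs, hzd]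
  rw [hq]
  have : c * γ = -lam1 * s := by rw [hc]; field_simp
  rw [hsval] at this
  field_simp at this ⊢
  nlinarith [this]
end

section
/- Let S_T be symmetric PSD with top eigenvalue λ₁ of multiplicity ι, eigenvalues λ₁ = … = λ_ι > λ_{ι+1} ≥ … ≥ λ_m > 0, and let d ∈ range(S_T) have nonzero component in the top eigenspace. Then as α → −λ₁ from below (α < −λ₁), the normalized ridge vector w_α = (S_T + αI)⁻¹d / ‖(S_T + αI)⁻¹d‖ converges (up to sign) to the normalized projection of d onto the top eigenspace of S_T, i.e., to a first principal component direction. -/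
open Matrix Filter

private lemma inv_aux {p m : ℕ} (U : Matrix (Fin p) (Fin m) ℝ) (hU : Uᵀ * U = 1)
    (lam : Fin m → ℝ) (α : ℝ) (hα0 : α ≠ 0) (hden : ∀ i, lam i + α ≠ 0) :
    (U * Matrix.diagonal lam * Uᵀ + α • 1)⁻¹ =
      α⁻¹ • 1 + U * Matrix.diagonal (fun i => (lam i + α)⁻¹ - α⁻¹) * Uᵀ := by
  apply Matrix.inv_eq_right_inv
  set e : Fin m → ℝ := fun i => (lam i + α)⁻¹ - α⁻¹ with he
  have hzero : (α⁻¹ • Matrix.diagonal lam + Matrix.diagonal lam * Matrix.diagonal e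
      + α • Matrix.diagonal e : Matrix (Fin m) (Fin m) ℝ) = 0 := by
    ext i j
    by_cases hij : i = j
    · subst hij
      simp only [Matrix.diagonal_mul_diagonal, Matrix.add_apply, Matrix.smul_apply,
        Matrix.diagonal_apply_eq, Matrix.zero_apply, smul_eq_mul, he]
      field_simp [hden i]
      ring
    · simp [Matrix.diagonal_mul_diagonal, Matrix.diagonal_apply_ne _ hij, hij]
  rw [Matrix.add_mul, Matrix.mul_add, Matrix.mul_add, Matrix.smul_mul, Matrix.mul_smul,
    Matrix.one_mul, Matrix.mul_one, Matrix.smul_mul, Matrix.one_mul, smul_smul,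
    mul_inv_cancel₀ hα0, one_smul]
  have hAB : U * Matrix.diagonal lam * Uᵀ * (U * Matrix.diagonal e * Uᵀ)
      = U * (Matrix.diagonal lam * Matrix.diagonal e) * Uᵀ := by
    rw [Matrix.mul_assoc U (Matrix.diagonal e) Uᵀ,
      Matrix.mul_assoc (U * Matrix.diagonal lam) Uᵀ,
      ← Matrix.mul_assoc Uᵀ U (Matrix.diagonal e * Uᵀ), hU, Matrix.one_mul,
      ← Matrix.mul_assoc, Matrix.mul_assoc U]
  have h1 : α⁻¹ • (U * Matrix.diagonal lam * Uᵀ) = U * (α⁻¹ • Matrix.diagonal lam) * Uᵀ := by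
    rw [Matrix.mul_smul, Matrix.smul_mul]
  have h2 : α • (U * Matrix.diagonal e * Uᵀ) = U * (α • Matrix.diagonal e) * Uᵀ := by
    rw [Matrix.mul_smul, Matrix.smul_mul]
  rw [hAB, h1, h2]
  have hcomb : U * (α⁻¹ • Matrix.diagonal lam) * Uᵀ
      + U * (Matrix.diagonal lam * Matrix.diagonal e) * Uᵀ
      + U * (α • Matrix.diagonal e) * Uᵀ = 0 := by
    rw [← Matrix.add_mul, ← Matrix.add_mul, ← Matrix.mul_add, ← Matrix.mul_add, hzero,
      Matrix.mul_zero, Matrix.zero_mul]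
  rw [add_comm (1 : Matrix (Fin p) (Fin p) ℝ), ← add_assoc, hcomb, zero_add]

/-- As `α → −λ₁⁻`, the normalized ridge vector `(S_T + αI)⁻¹ d / ‖·‖` converges, up to
sign, to the normalized projection of `d` onto the top eigenspace of `S_T`. -/
theorem stmt16 {p m : ℕ} (ι : ℕ) (hι : 0 < ι) (hιm : ι ≤ m)
    (U : Matrix (Fin p) (Fin m) ℝ) (hU : Uᵀ * U = 1)
    (lam : Fin m → ℝ) (lam1 : ℝ)
    (htop : ∀ i : Fin m, (i : ℕ) < ι → lam i = lam1)
    (hrest : ∀ i : Fin m, ι ≤ (i : ℕ) → 0 < lam i ∧ lam i < lam1)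
    (ST : Matrix (Fin p) (Fin p) ℝ) (hST : ST = U * Matrix.diagonal lam * Uᵀ)
    (d : Fin p → ℝ) (hdr : d ∈ LinearMap.range ST.mulVecLin)
    (htopnz : (fun i : Fin m => if (i : ℕ) < ι then (Uᵀ *ᵥ d) i else 0) ≠ 0)
    (w : ℝ → Fin p → ℝ) (hw : ∀ α, w α = (ST + α • 1)⁻¹ *ᵥ d)
    (proj : Fin p → ℝ)
    (hproj : proj = U *ᵥ fun i : Fin m => if (i : ℕ) < ι then (Uᵀ *ᵥ d) i else 0) :
    ∃ s : ℝ, (s = 1 ∨ s = -1) ∧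
      Tendsto (fun α => s • ((Real.sqrt (w α ⬝ᵥ w α))⁻¹ • w α))
        (nhdsWithin (-lam1) (Set.Iio (-lam1)))
        (nhds ((Real.sqrt (proj ⬝ᵥ proj))⁻¹ • proj)) := by
  classical
  subst hST hproj
  set δ : Fin m → ℝ := Uᵀ *ᵥ d with hδdef
  set δt : Fin m → ℝ := fun i => if (i : ℕ) < ι then δ i else 0 with hδtdef
  -- d = U *ᵥ δ
  obtain ⟨x, hx⟩ := hdr
  rw [Matrix.mulVecLin_apply] at hx
  have hδx : δ = (Matrix.diagonal lam * Uᵀ) *ᵥ x := by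
    rw [hδdef, ← hx, Matrix.mulVec_mulVec, ← Matrix.mul_assoc, ← Matrix.mul_assoc, hU,
      Matrix.one_mul]
  have hdU : U *ᵥ δ = d := by
    rw [hδx, Matrix.mulVec_mulVec, ← Matrix.mul_assoc, hx]
  -- orthonormality of dot products
  have hdot : ∀ v : Fin m → ℝ, (U *ᵥ v) ⬝ᵥ (U *ᵥ v) = v ⬝ᵥ v := by
    intro v
    rw [Matrix.dotProduct_mulVec, ← Matrix.mulVec_transpose, Matrix.mulVec_mulVec, hU,
      Matrix.one_mulVec]
  -- positivity of δt ⬝ᵥ δt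
  have hpos : 0 < δt ⬝ᵥ δt := by
    have hne : δt ⬝ᵥ δt ≠ 0 := fun hc => htopnz (dotProduct_self_eq_zero.mp hc)
    have hnn : 0 ≤ δt ⬝ᵥ δt := Finset.sum_nonneg fun i _ => mul_self_nonneg _
    exact hnn.lt_of_ne (Ne.symm hne)
  have hden : ∀ α : ℝ, α < -lam1 → ∀ i, lam i + α < 0 := by
    intro α hα i
    rcases lt_or_ge (i : ℕ) ι with hi | hi
    · rw [htop i hi]; linarith
    · have := (hrest i hi).2; linarith
  -- the auxiliary function
  set G : ℝ → Fin m → ℝ :=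
    fun α i => if (i : ℕ) < ι then δ i else (lam1 + α) / (lam i + α) * δ i with hGdef
  have hGlim : Tendsto G (nhds (-lam1)) (nhds δt) := by
    rw [tendsto_pi_nhds]
    intro i
    by_cases hi : (i : ℕ) < ι
    · simp only [hGdef, hδtdef, if_pos hi]
      exact tendsto_const_nhds
    · simp only [hGdef, hδtdef, if_neg hi]
      have hne : lam i + -lam1 ≠ 0 := by
        have := (hrest i (le_of_not_gt hi)).2; intro hc; linarith
      have hnum : Tendsto (fun α : ℝ => lam1 + α) (nhds (-lam1)) (nhds (lam1 + -lam1)) :=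
        tendsto_const_nhds.add tendsto_id
      have hdenom : Tendsto (fun α : ℝ => lam i + α) (nhds (-lam1)) (nhds (lam i + -lam1)) :=
        tendsto_const_nhds.add tendsto_id
      have := (hnum.div hdenom hne).mul (tendsto_const_nhds (x := δ i))
      simpa using this
  -- continuity facts
  have hcdot : Continuous (fun v : Fin m → ℝ => v ⬝ᵥ v) :=
    continuous_finset_sum _ fun i _ => (continuous_apply i).mul (continuous_apply i)
  have hcmv : Continuous (fun v : Fin m → ℝ => U *ᵥ v) := by
    apply continuous_pi
    intro j
    simp only [Matrix.mulVec, dotProduct]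
    exact continuous_finset_sum _ fun i _ => continuous_const.mul (continuous_apply i)
  have hFlim : Tendsto (fun α => (Real.sqrt (G α ⬝ᵥ G α))⁻¹ • (U *ᵥ G α)) (nhds (-lam1))
      (nhds ((Real.sqrt (δt ⬝ᵥ δt))⁻¹ • (U *ᵥ δt))) := by
    have h1 : Tendsto (fun α => G α ⬝ᵥ G α) (nhds (-lam1)) (nhds (δt ⬝ᵥ δt)) :=
      (hcdot.tendsto δt).comp hGlim
    have h2 : Tendsto (fun α => (Real.sqrt (G α ⬝ᵥ G α))⁻¹) (nhds (-lam1))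
        (nhds (Real.sqrt (δt ⬝ᵥ δt))⁻¹) :=
      ((Real.continuous_sqrt.tendsto _).comp h1).inv₀ (ne_of_gt (Real.sqrt_pos.mpr hpos))
    exact h2.smul ((hcmv.tendsto δt).comp hGlim)
  -- eventually α ≠ 0
  have hev0 : ∀ᶠ α in nhdsWithin (-lam1) (Set.Iio (-lam1)), α ≠ (0 : ℝ) := by
    by_cases hl0 : lam1 = 0
    · filter_upwards [self_mem_nhdsWithin] with a ha
      subst hl0
      simp only [Set.mem_Iio, neg_zero] at ha
      exact ne_of_lt ha
    · exact (eventually_ne_nhds (neg_ne_zero.mpr hl0)).filter_mono nhdsWithin_le_nhds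
  -- eventual equality
  have hevEq : (fun α => (-1 : ℝ) • ((Real.sqrt (w α ⬝ᵥ w α))⁻¹ • w α))
      =ᶠ[nhdsWithin (-lam1) (Set.Iio (-lam1))]
      (fun α => (Real.sqrt (G α ⬝ᵥ G α))⁻¹ • (U *ᵥ G α)) := by
    filter_upwards [hev0, self_mem_nhdsWithin] with α hα0 hαlt
    simp only [Set.mem_Iio] at hαlt
    have hdeni := hden α hαlt
    have ht : lam1 + α < 0 := by
      have := hdeni ⟨0, lt_of_lt_of_le hι hιm⟩
      rw [htop _ hι] at this
      exact this
    set g : Fin m → ℝ := fun i => (lam i + α)⁻¹ * δ i with hgdef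
    have hwg : w α = U *ᵥ g := by
      rw [hw α, inv_aux U hU lam α hα0 (fun i => (hdeni i).ne), Matrix.add_mulVec,
        Matrix.smul_mulVec, Matrix.one_mulVec, ← Matrix.mulVec_mulVec,
        ← Matrix.mulVec_mulVec, show Uᵀ *ᵥ d = δ from rfl, ← hdU, ← Matrix.mulVec_smul,
        ← Matrix.mulVec_add]
      refine congrArg (fun v => U *ᵥ v) (funext fun i => ?_)
      simp only [Pi.add_apply, Pi.smul_apply, smul_eq_mul, Matrix.mulVec_diagonal, hgdef]
      ring
    have hGg : G α = (lam1 + α) • g := by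
      funext i
      by_cases hi : (i : ℕ) < ι
      · simp only [hGdef, if_pos hi, Pi.smul_apply, hgdef, smul_eq_mul, htop i hi]
        rw [← mul_assoc, mul_inv_cancel₀ (ne_of_lt ht), one_mul]
      · simp only [hGdef, if_neg hi, Pi.smul_apply, hgdef, smul_eq_mul, div_eq_mul_inv]
        ring
    rw [hwg, hdot g, hGg]
    set s := Real.sqrt (g ⬝ᵥ g) with hsdef
    set t := lam1 + α with htdef
    have hdot2 : (t • g) ⬝ᵥ (t • g) = t ^ 2 * (g ⬝ᵥ g) := by
      rw [smul_dotProduct, dotProduct_smul, smul_eq_mul, smul_eq_mul]; ring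
    have ht' : t ≠ 0 := ne_of_lt ht
    rw [hdot2, Real.sqrt_mul (sq_nonneg t), Real.sqrt_sq_eq_abs, abs_of_neg ht,
      Matrix.mulVec_smul, smul_smul, smul_smul]
    congr 1
    rw [mul_inv, inv_neg, neg_mul, neg_mul, one_mul, neg_mul, neg_inj,
      mul_comm t⁻¹, mul_assoc, inv_mul_cancel₀ ht', mul_one]
  refine ⟨-1, Or.inr rfl, ?_⟩
  rw [hdot δt]
  exact (hFlim.mono_left nhdsWithin_le_nhds).congr' hevEq.symm
end
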